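/- arXiv:2508.01393 — 3 statements merged into one kernel-verified Lean document; each statement's English description precedes it below -/
import Mathlib

section
/- Let 0 ≤ r < R, let Z be a bounded nonnegative function on [r,R], and let X: [0,∞) → [0,∞) be almost decreasing with constant L ≥ 1 (i.e., X(s) ≤ L·X(t) whenever t ≤ s). Suppose there exists θ ∈ [0,1) such that Z(s) ≤ θ·Z(t) + X(1/(t-s)) for all r ≤ s < t ≤ R. Then there is a constant c depending only on θ and L such that Z(r) ≤ c·X(1/(R-r)). -/
/-- Iteration lemma: if Z is bounded nonnegative on [r,R], X is almost decreasing with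
constant L, and Z(s) ≤ θ Z(t) + X(1/(t-s)) for r ≤ s < t ≤ R with θ ∈ [0,1),
then Z(r) ≤ c·X(1/(R-r)) with c depending only on θ and L. -/
theorem stmt6 (θ L : ℝ) (hθ0 : 0 ≤ θ) (hθ1 : θ < 1) (hL : 1 ≤ L) :
    ∃ c > (0:ℝ), ∀ (r R : ℝ) (Z X : ℝ → ℝ),
      0 ≤ r → r < R →
      (∀ s ∈ Set.Icc r R, 0 ≤ Z s) →
      (∃ M : ℝ, ∀ s ∈ Set.Icc r R, Z s ≤ M) →
      (∀ t : ℝ, 0 ≤ t → 0 ≤ X t) →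
      (∀ t s : ℝ, 0 ≤ t → t ≤ s → X s ≤ L * X t) →
      (∀ s t : ℝ, r ≤ s → s < t → t ≤ R → Z s ≤ θ * Z t + X (1 / (t - s))) →
      Z r ≤ c * X (1 / (R - r)) := by
  have h1θ : 0 < 1 - θ := by linarith
  refine ⟨L / (1 - θ), by positivity, ?_⟩
  intro r R Z X hr hrR hZ0 ⟨M, hM⟩ hX0 hXdec hiter
  set c : ℝ := L / (1 - θ) with hc
  have hRr : 0 < R - r := by linarith
  set s : ℕ → ℝ := fun n => R - (R - r) / 2 ^ n with hs
  have hsmem : ∀ n, s n ∈ Set.Icc r R := by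
    intro n
    constructor
    · have h2 : (1:ℝ) ≤ 2 ^ n := one_le_pow₀ (by norm_num)
      have : (R - r) / 2 ^ n ≤ R - r := by
        rw [div_le_iff₀ (by positivity)]
        nlinarith
      simp only [hs]; linarith
    · have : 0 < (R - r) / 2 ^ n := by positivity
      simp only [hs]; linarith
  have hXnn : 0 ≤ X (1 / (R - r)) := hX0 _ (by positivity)
  have hkey : ∀ n, Z r ≤ θ ^ n * Z (s n) + (∑ i ∈ Finset.range n, θ ^ i) * (L * X (1 / (R - r))) := by
    intro n
    induction n with
    | zero =>
      simp only [hs, pow_zero, Finset.range_zero, Finset.sum_empty, one_mul, zero_mul, add_zero,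
        pow_zero, div_one]
      simp
    | succ n ih =>
      have hlt : s n < s (n + 1) := by
        simp only [hs]
        have : (R - r) / 2 ^ (n + 1) < (R - r) / 2 ^ n := by
          apply div_lt_div_of_pos_left hRr (by positivity)
          exact pow_lt_pow_right₀ (by norm_num) (Nat.lt_succ_self n)
        linarith
      have hdiff : s (n + 1) - s n = (R - r) / 2 ^ (n + 1) := by
        simp only [hs]
        field_simp
        ring
      have hstep := hiter (s n) (s (n + 1)) (hsmem n).1 hlt (hsmem (n + 1)).2
      rw [hdiff] at hstep
      have hXb : X (1 / ((R - r) / 2 ^ (n + 1))) ≤ L * X (1 / (R - r)) := by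
        apply hXdec _ _ (by positivity)
        rw [one_div, one_div]
        apply inv_anti₀ (by positivity)
        have h2 : (1:ℝ) ≤ 2 ^ (n + 1) := one_le_pow₀ (by norm_num)
        rw [div_le_iff₀ (by positivity)]
        nlinarith
      have hstep2 : Z (s n) ≤ θ * Z (s (n + 1)) + L * X (1 / (R - r)) := le_trans hstep (by linarith)
      calc Z r ≤ θ ^ n * Z (s n) + (∑ i ∈ Finset.range n, θ ^ i) * (L * X (1 / (R - r))) := ih
        _ ≤ θ ^ n * (θ * Z (s (n + 1)) + L * X (1 / (R - r)))
              + (∑ i ∈ Finset.range n, θ ^ i) * (L * X (1 / (R - r))) := by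
            gcongr
        _ = θ ^ (n + 1) * Z (s (n + 1))
              + (∑ i ∈ Finset.range (n + 1), θ ^ i) * (L * X (1 / (R - r))) := by
            rw [Finset.sum_range_succ]; ring
  have hbound : ∀ n, Z r ≤ θ ^ n * M + c * X (1 / (R - r)) := by
    intro n
    have hMZ : Z (s n) ≤ M := hM _ (hsmem n)
    have hsum : (∑ i ∈ Finset.range n, θ ^ i) ≤ 1 / (1 - θ) := by
      calc (∑ i ∈ Finset.range n, θ ^ i) = (1 - θ ^ n) / (1 - θ) := by
            rw [geom_sum_eq (by intro h; rw [h] at hθ1; linarith : θ ≠ 1),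
              ← neg_sub (1:ℝ) (θ ^ n), ← neg_sub (1:ℝ) θ, neg_div_neg_eq]
        _ ≤ 1 / (1 - θ) := by
            gcongr
            have := pow_nonneg hθ0 n
            linarith
    have hLX : 0 ≤ L * X (1 / (R - r)) := by positivity
    calc Z r ≤ θ ^ n * Z (s n) + (∑ i ∈ Finset.range n, θ ^ i) * (L * X (1 / (R - r))) :=
          hkey n
      _ ≤ θ ^ n * M + (1 / (1 - θ)) * (L * X (1 / (R - r))) := by
          gcongr

      _ = θ ^ n * M + c * X (1 / (R - r)) := by rw [hc]; ring
  have htend : Filter.Tendsto (fun n : ℕ => θ ^ n * M + c * X (1 / (R - r)))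
      Filter.atTop (nhds (0 * M + c * X (1 / (R - r)))) := by
    exact ((tendsto_pow_atTop_nhds_zero_of_lt_one hθ0 hθ1).mul_const M).add tendsto_const_nhds
  have := ge_of_tendsto' htend hbound
  linarith [this]
end

section
/- Let 1 < p ≤ q < ∞, let σ_j → ∞ be a sequence of positive reals, and let φ: [0,∞) → [0,∞) be a C¹ convex function with φ(0) = 0 whose derivative φ' satisfies (inc)_{p-1} and (dec)_{q-1}. Define φ̄_j(t) := φ(t σ_j)/φ(σ_j). Then there is a subsequence (σ_{j_k}) such that φ̄_{j_k} converges uniformly on compact subsets of [0,∞) to a C¹ convex function φ_∞ whose derivative satisfies (inc)_{p-1} and (dec)_{q-1}. -/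
/-!
Write `φ (t * σ) / φ σ = ∫ u in 0..t, ψ_σ u` with `ψ_σ t = σ / φ σ * φ' (t * σ)`. Monotonicity,
(inc)_{p-1} and (dec)_{q-1} are invariant under this rescaling, and integrating (dec)_{q-1} over
`[0, σ]` gives `σ φ' σ ≤ q φ σ`, i.e. `ψ_σ 1 ≤ q`. The functions with these properties form
an equicontinuous, pointwise bounded family, hence (Arzelà–Ascoli) a compact subset of
`C(ℝ, ℝ)` with the topology of locally uniform convergence. So a subsequence of the `ψ_{σ_j}`
converges locally uniformly to some `ψ` in the same class, and `φ_∞ t = ∫ u in 0..t, ψ u` is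
the locally uniform limit of the primitives.
-/

open Set Filter Topology MeasureTheory

section PowerQuotients

variable {g : ℝ → ℝ} {a : ℝ}

lemma mul_rpow_le_of_monotoneOn_div_rpow (hg : MonotoneOn (fun t => g t / t ^ a) (Ioi 0))
    {s t : ℝ} (hs : 0 < s) (hst : s ≤ t) : g s * t ^ a ≤ g t * s ^ a := by
  have ht := hs.trans_le hst
  have h := hg hs ht hst
  rwa [div_le_div_iff₀ (Real.rpow_pos_of_pos hs a) (Real.rpow_pos_of_pos ht a)] at h

lemma mul_rpow_le_of_antitoneOn_div_rpow (hg : AntitoneOn (fun t => g t / t ^ a) (Ioi 0))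
    {s t : ℝ} (hs : 0 < s) (hst : s ≤ t) : g t * s ^ a ≤ g s * t ^ a := by
  have ht := hs.trans_le hst
  have h := hg hs ht hst
  rwa [div_le_div_iff₀ (Real.rpow_pos_of_pos ht a) (Real.rpow_pos_of_pos hs a)] at h

lemma div_rpow_comp_mul_eq {k c t : ℝ} (hc : 0 < c) (ht : 0 < t) :
    k * g (t * c) / t ^ a = k * c ^ a * (g (t * c) / (t * c) ^ a) := by
  rw [Real.mul_rpow ht.le hc.le]
  field_simp

lemma MonotoneOn.div_rpow_comp_mul (hg : MonotoneOn (fun t => g t / t ^ a) (Ioi 0))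
    {k c : ℝ} (hk : 0 ≤ k) (hc : 0 < c) :
    MonotoneOn (fun t => k * g (t * c) / t ^ a) (Ioi 0) := by
  intro s hs t ht hst
  simp only [div_rpow_comp_mul_eq hc hs, div_rpow_comp_mul_eq hc ht]
  exact mul_le_mul_of_nonneg_left (hg (mul_pos hs hc) (mul_pos ht hc)
    (mul_le_mul_of_nonneg_right hst hc.le)) (by positivity)

lemma AntitoneOn.div_rpow_comp_mul (hg : AntitoneOn (fun t => g t / t ^ a) (Ioi 0))
    {k c : ℝ} (hk : 0 ≤ k) (hc : 0 < c) :
    AntitoneOn (fun t => k * g (t * c) / t ^ a) (Ioi 0) := by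
  intro s hs t ht hst
  simp only [div_rpow_comp_mul_eq hc hs, div_rpow_comp_mul_eq hc ht]
  exact mul_le_mul_of_nonneg_left (hg (mul_pos hs hc) (mul_pos ht hc)
    (mul_le_mul_of_nonneg_right hst hc.le)) (by positivity)

-- For `0 < t ≤ 1` we have `g 1 * t ^ b ≤ g t ≤ g 1 * t ^ a`.
lemma eq_zero_of_monotoneOn_div_rpow_of_antitoneOn {b : ℝ} (ha : 0 < a) (hb : 0 < b)
    (hg0 : ContinuousWithinAt g (Ioi 0) 0)
    (hinc : MonotoneOn (fun t => g t / t ^ a) (Ioi 0))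
    (hdec : AntitoneOn (fun t => g t / t ^ b) (Ioi 0)) : g 0 = 0 := by
  have hpow : ∀ e : ℝ, 0 < e → Tendsto (fun t : ℝ => g 1 * t ^ e) (𝓝[>] 0) (𝓝 0) := by
    intro e he
    have := ((continuous_id.rpow_const fun _ => Or.inr he.le).const_mul (g 1)).tendsto 0
    simpa [Real.zero_rpow he.ne'] using this.mono_left nhdsWithin_le_nhds
  refine tendsto_nhds_unique hg0.tendsto
    (tendsto_of_tendsto_of_tendsto_of_le_of_le' (hpow b hb) (hpow a ha) ?_ ?_)
  all_goals
    filter_upwards [Ioc_mem_nhdsGT one_pos] with t ht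
  · simpa using mul_rpow_le_of_antitoneOn_div_rpow hdec ht.1 ht.2
  · simpa [mul_comm] using mul_rpow_le_of_monotoneOn_div_rpow hinc ht.1 ht.2

end PowerQuotients

/-- Extended by `0` to `(-∞, 0]`, so that the class lives in `C(ℝ, ℝ)`. -/
structure IsIncDec (a b C : ℝ) (f : ℝ → ℝ) : Prop where
  mono : Monotone f
  eq_zero_of_nonpos : ∀ t ≤ 0, f t = 0
  inc : MonotoneOn (fun t => f t / t ^ a) (Ioi 0)
  dec : AntitoneOn (fun t => f t / t ^ b) (Ioi 0)
  apply_one_le : f 1 ≤ C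

namespace IsIncDec

variable {a b C : ℝ} {f : ℝ → ℝ}

lemma nonneg (hf : IsIncDec a b C f) (t : ℝ) : 0 ≤ f t :=
  (hf.eq_zero_of_nonpos _ (min_le_right t 0)).symm.le.trans (hf.mono (min_le_left t 0))

lemma le_mul_max_one_rpow (hf : IsIncDec a b C f) (t : ℝ) : f t ≤ C * max 1 (t ^ b) := by
  have hC : 0 ≤ C := (hf.nonneg 1).trans hf.apply_one_le
  rcases le_total t 1 with ht | ht
  · calc f t ≤ C * 1 := by simpa using (hf.mono ht).trans hf.apply_one_le
      _ ≤ C * max 1 (t ^ b) := mul_le_mul_of_nonneg_left (le_max_left _ _) hC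
  · calc f t ≤ f 1 * t ^ b := by
          simpa using mul_rpow_le_of_antitoneOn_div_rpow hf.dec one_pos ht
      _ ≤ C * max 1 (t ^ b) := mul_le_mul hf.apply_one_le (le_max_right _ _) (by positivity) hC

lemma le_mul_max_zero_rpow_of_le_one (hf : IsIncDec a b C f) {t : ℝ} (ht : t ≤ 1) :
    f t ≤ C * max t 0 ^ a := by
  rcases le_or_gt t 0 with ht0 | ht0
  · rw [hf.eq_zero_of_nonpos t ht0]
    exact mul_nonneg ((hf.nonneg 1).trans hf.apply_one_le) (by positivity)
  · rw [max_eq_left ht0.le]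
    calc f t ≤ f 1 * t ^ a := by
          simpa [mul_comm] using mul_rpow_le_of_monotoneOn_div_rpow hf.inc ht0 ht
      _ ≤ C * t ^ a := mul_le_mul_of_nonneg_right hf.apply_one_le (by positivity)

-- (dec) and monotonicity pin `f x` between `f x₀` and `f x₀ * (x / x₀) ^ b`.
lemma abs_sub_le (hf : IsIncDec a b C f) {x₀ x : ℝ} (hx₀ : 0 < x₀) (hx : 0 < x) :
    |f x - f x₀| ≤ f x₀ * |(x / x₀) ^ b - 1| := by
  have hsplit : f x₀ * (x / x₀) ^ b = f x₀ * x ^ b / x₀ ^ b := by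
    rw [Real.div_rpow hx.le hx₀.le, mul_div_assoc]
  have hx₀b := Real.rpow_pos_of_pos hx₀ b
  rcases le_total x₀ x with h | h
  · have hup : f x ≤ f x₀ * (x / x₀) ^ b := by
      rw [hsplit, le_div_iff₀ hx₀b]
      exact mul_rpow_le_of_antitoneOn_div_rpow hf.dec hx₀ h
    rw [abs_of_nonneg (sub_nonneg.2 (hf.mono h))]
    calc f x - f x₀ ≤ f x₀ * ((x / x₀) ^ b - 1) := by
          linarith [mul_sub_one (f x₀) ((x / x₀) ^ b)]
      _ ≤ f x₀ * |(x / x₀) ^ b - 1| := mul_le_mul_of_nonneg_left (le_abs_self _) (hf.nonneg _)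
  · have hlow : f x₀ * (x / x₀) ^ b ≤ f x := by
      rw [hsplit, div_le_iff₀ hx₀b]
      exact mul_rpow_le_of_antitoneOn_div_rpow hf.dec hx h
    rw [abs_of_nonpos (sub_nonpos.2 (hf.mono h))]
    calc -(f x - f x₀) ≤ f x₀ * -((x / x₀) ^ b - 1) := by
          linarith [mul_sub_one (f x₀) ((x / x₀) ^ b)]
      _ ≤ f x₀ * |(x / x₀) ^ b - 1| := mul_le_mul_of_nonneg_left (neg_le_abs _) (hf.nonneg _)

lemma comp_mul (hf : IsIncDec a b C f) {C' k c : ℝ} (hk : 0 ≤ k) (hc : 0 < c)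
    (h1 : k * f c ≤ C') : IsIncDec a b C' (fun t => k * f (t * c)) where
  mono _ _ hst := mul_le_mul_of_nonneg_left (hf.mono (mul_le_mul_of_nonneg_right hst hc.le)) hk
  eq_zero_of_nonpos t ht := by
    rw [hf.eq_zero_of_nonpos _ (mul_nonpos_of_nonpos_of_nonneg ht hc.le), mul_zero]
  inc := hf.inc.div_rpow_comp_mul hk hc
  dec := hf.dec.div_rpow_comp_mul hk hc
  apply_one_le := by simpa using h1

theorem equicontinuous (ha : 0 < a) :
    Equicontinuous ((↑) : {f : ℝ → ℝ // IsIncDec a b C f} → ℝ → ℝ) := by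
  intro x₀
  rcases le_or_gt x₀ 0 with hx₀ | hx₀
  · refine Metric.equicontinuousAt_of_continuity_modulus (fun x => C * max x 0 ^ a) ?_ _ ?_
    · have : Continuous fun x : ℝ => C * max x 0 ^ a :=
        ((continuous_id.max continuous_const).rpow_const fun _ => Or.inr ha.le).const_mul C
      simpa [max_eq_right hx₀, Real.zero_rpow ha.ne'] using this.tendsto x₀
    · filter_upwards [eventually_lt_nhds (hx₀.trans_lt one_pos)] with x hx
      rintro ⟨f, hf⟩
      change dist (f x₀) (f x) ≤ _
      rw [hf.eq_zero_of_nonpos x₀ hx₀, dist_zero_left, Real.norm_eq_abs,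
        abs_of_nonneg (hf.nonneg x)]
      exact hf.le_mul_max_zero_rpow_of_le_one hx.le
  · refine Metric.equicontinuousAt_of_continuity_modulus
      (fun x => C * max 1 (x₀ ^ b) * |(x / x₀) ^ b - 1|) ?_ _ ?_
    · have : ContinuousAt (fun x : ℝ => C * max 1 (x₀ ^ b) * |(x / x₀) ^ b - 1|) x₀ :=
        continuousAt_const.mul (((continuousAt_id.div_const x₀).rpow_const
          (Or.inl (div_ne_zero hx₀.ne' hx₀.ne'))).sub continuousAt_const).abs
      simpa [div_self hx₀.ne'] using this.tendsto
    · filter_upwards [eventually_gt_nhds hx₀] with x hx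
      rintro ⟨f, hf⟩
      change dist (f x₀) (f x) ≤ _
      rw [dist_comm, Real.dist_eq]
      exact (hf.abs_sub_le hx₀ hx).trans
        (mul_le_mul_of_nonneg_right (hf.le_mul_max_one_rpow x₀) (abs_nonneg _))

lemma continuous (ha : 0 < a) (hf : IsIncDec a b C f) : Continuous f :=
  (equicontinuous ha).continuous ⟨f, hf⟩

lemma isClosed_setOf : IsClosed {f : ℝ → ℝ | IsIncDec a b C f} := by
  have hset : {f : ℝ → ℝ | IsIncDec a b C f} =
      {f | Monotone f} ∩ {f | ∀ t ≤ 0, f t = 0} ∩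
      ((fun f t => f t / t ^ a) ⁻¹' {g | MonotoneOn g (Ioi 0)}) ∩
      ((fun f t => f t / t ^ b) ⁻¹' {g | AntitoneOn g (Ioi 0)}) ∩ {f | f 1 ≤ C} := by
    ext f
    exact ⟨fun ⟨h₁, h₂, h₃, h₄, h₅⟩ => ⟨⟨⟨⟨h₁, h₂⟩, h₃⟩, h₄⟩, h₅⟩,
      fun ⟨⟨⟨⟨h₁, h₂⟩, h₃⟩, h₄⟩, h₅⟩ => ⟨h₁, h₂, h₃, h₄, h₅⟩⟩
  have hdiv : ∀ e : ℝ, Continuous fun (f : ℝ → ℝ) (t : ℝ) => f t / t ^ e :=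
    fun e => continuous_pi fun t => (continuous_apply t).div_const _
  rw [hset]
  refine (((isClosed_monotone.inter ?_).inter (isClosed_monotoneOn.preimage (hdiv a))).inter
    (isClosed_antitoneOn.preimage (hdiv b))).inter
    (isClosed_le (continuous_apply 1) continuous_const)
  simp only [ofPred_forall]
  exact isClosed_iInter fun t => isClosed_iInter fun _ =>
    isClosed_eq (continuous_apply t) continuous_const

theorem isCompact_setOf (ha : 0 < a) : IsCompact {f : C(ℝ, ℝ) | IsIncDec a b C f} := by
  refine ArzelaAscoli.isCompact_of_equicontinuous _ ?_
    ((equicontinuous ha).comp fun f : {f : C(ℝ, ℝ) // IsIncDec a b C f} => ⟨f.1, f.2⟩)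
  have himage : ContinuousMap.toFun '' {f : C(ℝ, ℝ) | IsIncDec a b C f} =
      {f | IsIncDec a b C f} := by
    ext f
    refine ⟨?_, fun hf => ⟨⟨f, hf.continuous ha⟩, hf, rfl⟩⟩
    rintro ⟨f, hf, rfl⟩
    exact hf
  rw [himage]
  exact (isCompact_univ_pi fun t => isCompact_Icc).of_isClosed_subset isClosed_setOf
    fun f hf t _ => ⟨hf.nonneg t, hf.le_mul_max_one_rpow (C := C) t⟩

theorem exists_subseq_tendstoUniformlyOn (ha : 0 < a) {ψ : ℕ → ℝ → ℝ}
    (hψ : ∀ n, IsIncDec a b C (ψ n)) :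
    ∃ g, IsIncDec a b C g ∧ ∃ k : ℕ → ℕ, StrictMono k ∧
      ∀ K, IsCompact K → TendstoUniformlyOn (fun n => ψ (k n)) g atTop K := by
  obtain ⟨g, hg, k, hk, hlim⟩ := (isCompact_setOf ha).tendsto_subseq
    (x := fun n => ⟨ψ n, (hψ n).continuous ha⟩) hψ
  exact ⟨g, hg, k, hk, ContinuousMap.tendsto_iff_forall_isCompact_tendstoUniformlyOn.mp hlim⟩

end IsIncDec

section Integrals

lemma integral_eq_sub_of_hasDerivWithinAt_Ici {f f' : ℝ → ℝ} {a b : ℝ} (hab : a ≤ b)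
    (hf : ∀ t ∈ Icc a b, HasDerivWithinAt f (f' t) (Ici a) t)
    (hint : IntervalIntegrable f' volume a b) : ∫ t in a..b, f' t = f b - f a :=
  intervalIntegral.integral_eq_sub_of_hasDeriv_right_of_le hab
    (fun t ht => (hf t ht).continuousWithinAt.mono Icc_subset_Ici_self)
    (fun t ht => (hf t (Ioo_subset_Icc_self ht)).mono (Ioi_subset_Ici ht.1.le)) hint

lemma mul_le_integral_of_antitoneOn_div_rpow {g : ℝ → ℝ} {b s : ℝ} (hb : -1 < b) (hs : 0 < s)
    (hg : IntervalIntegrable g volume 0 s)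
    (hdec : AntitoneOn (fun t => g t / t ^ b) (Ioi 0)) :
    s * g s ≤ (b + 1) * ∫ u in 0..s, g u := by
  have hb1 : 0 < b + 1 := by linarith
  have hlow : ∫ u in 0..s, g s / s ^ b * u ^ b ≤ ∫ u in 0..s, g u := by
    refine intervalIntegral.integral_mono_on_of_le_Ioo hs.le
      ((intervalIntegral.intervalIntegrable_rpow' hb).const_mul _) hg fun u hu => ?_
    rw [div_mul_eq_mul_div, div_le_iff₀ (Real.rpow_pos_of_pos hs b)]
    exact mul_rpow_le_of_antitoneOn_div_rpow hdec hu.1 hu.2.le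
  have hval : ∫ u in 0..s, g s / s ^ b * u ^ b = s * g s / (b + 1) := by
    rw [intervalIntegral.integral_const_mul, integral_rpow (Or.inl hb),
      Real.zero_rpow hb1.ne', sub_zero, Real.rpow_add_one hs.ne']
    field_simp
  rw [hval, div_le_iff₀' hb1] at hlow
  exact hlow

theorem TendstoUniformlyOn.intervalIntegral {ι : Type*} {F : ι → ℝ → ℝ} {f : ℝ → ℝ}
    {l : Filter ι} {a b : ℝ} (hF : ∀ i, IntervalIntegrable (F i) volume a b)
    (hf : IntervalIntegrable f volume a b) (h : TendstoUniformlyOn F f l (Icc a b)) :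
    TendstoUniformlyOn (fun i t => ∫ u in a..t, F i u) (fun t => ∫ u in a..t, f u) l
      (Icc a b) := by
  rw [Metric.tendstoUniformlyOn_iff] at h ⊢
  intro ε hε
  set δ := ε / (|b - a| + 1)
  have hδ : 0 < δ := by positivity
  filter_upwards [h δ hδ] with i hi t ht
  have hsub : uIcc a t ⊆ uIcc a b := uIcc_subset_uIcc_left (Icc_subset_uIcc ht)
  rw [dist_eq_norm, ← intervalIntegral.integral_sub (hf.mono_set hsub) ((hF i).mono_set hsub)]
  refine (intervalIntegral.norm_integral_le_of_norm_le_const (C := δ)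
    fun u hu => ?_).trans_lt ?_
  · rw [uIoc_of_le ht.1] at hu
    exact (dist_eq_norm (f u) (F i u) ▸ hi u ⟨hu.1.le, hu.2.trans ht.2⟩).le
  · calc δ * |t - a| ≤ δ * |b - a| := by gcongr <;> linarith [ht.1, ht.2]
      _ < δ * (|b - a| + 1) := by gcongr; linarith
      _ = ε := div_mul_cancel₀ ε (by positivity)

end Integrals

section Rescaling

variable {φ g : ℝ → ℝ}

lemma ConvexOn.exists_isIncDec_deriv {φ' : ℝ → ℝ} {a b : ℝ} (ha : 0 < a) (hb : 0 < b)
    (hconv : ConvexOn ℝ (Ici 0) φ) (hderiv : ∀ t ∈ Ici 0, HasDerivWithinAt φ (φ' t) (Ici 0) t)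
    (hcont : ContinuousOn φ' (Ici 0)) (hinc : MonotoneOn (fun t => φ' t / t ^ a) (Ioi 0))
    (hdec : AntitoneOn (fun t => φ' t / t ^ b) (Ioi 0)) :
    ∃ g, Continuous g ∧ IsIncDec a b (φ' 1) g ∧
      ∀ t ∈ Ici 0, HasDerivWithinAt φ (g t) (Ici 0) t := by
  have hφ'0 : φ' 0 = 0 := eq_zero_of_monotoneOn_div_rpow_of_antitoneOn ha hb
    ((hcont 0 self_mem_Ici).mono Ioi_subset_Ici_self) hinc hdec
  have hmono : MonotoneOn φ' (Ici 0) :=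
    (hconv.monotoneOn_derivWithin fun t ht => (hderiv t ht).differentiableWithinAt).congr
      fun t ht => (hderiv t ht).derivWithin (uniqueDiffOn_Ici 0 t ht)
  have hpos : ∀ t : ℝ, 0 < t → φ' (max t 0) = φ' t := fun t ht => by rw [max_eq_left ht.le]
  refine ⟨fun t => φ' (max t 0),
    hcont.comp_continuous (continuous_id.max continuous_const) fun t => le_max_right t 0,
    ⟨fun s t hst => hmono (le_max_right s 0) (le_max_right t 0) (max_le_max_right 0 hst),
      fun t ht => by simp only [max_eq_right ht, hφ'0],
      hinc.congr fun t ht => by simp only [hpos t ht],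
      hdec.congr fun t ht => by simp only [hpos t ht],
      (hpos 1 one_pos).le⟩,
    fun t (ht : 0 ≤ t) => by simpa only [max_eq_left ht] using hderiv t ht⟩

variable (hgc : Continuous g) (hφ0 : φ 0 = 0)
  (hderiv : ∀ t ∈ Ici 0, HasDerivWithinAt φ (g t) (Ici 0) t)
include hgc hφ0 hderiv

lemma eq_integral_of_hasDerivWithinAt_Ici {x : ℝ} (hx : 0 ≤ x) : φ x = ∫ u in 0..x, g u := by
  rw [integral_eq_sub_of_hasDerivWithinAt_Ici hx (fun t ht => hderiv t ht.1)
    (hgc.intervalIntegrable _ _), hφ0, sub_zero]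

lemma IsIncDec.rescale {a b C : ℝ} (hb : -1 < b) (hg : IsIncDec a b C g) {c : ℝ}
    (hc : 0 < c) :
    IsIncDec a b (b + 1) (fun t => c / φ c * g (t * c)) := by
  have hφc := eq_integral_of_hasDerivWithinAt_Ici hgc hφ0 hderiv hc.le
  have hφc0 : 0 ≤ φ c := hφc ▸ intervalIntegral.integral_nonneg hc.le fun u _ => hg.nonneg u
  refine hg.comp_mul (div_nonneg hc.le hφc0) hc ?_
  rw [div_mul_eq_mul_div]
  refine div_le_of_le_mul₀ hφc0 (by linarith) ?_
  rw [hφc]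
  exact mul_le_integral_of_antitoneOn_div_rpow hb hc (hgc.intervalIntegrable _ _) hg.dec

lemma integral_rescale_eq_div {c t : ℝ} (hc : 0 < c) (ht : 0 ≤ t) :
    ∫ u in 0..t, c / φ c * g (u * c) = φ (t * c) / φ c := by
  rw [intervalIntegral.integral_const_mul, intervalIntegral.integral_comp_mul_right _ hc.ne',
    zero_mul, ← eq_integral_of_hasDerivWithinAt_Ici hgc hφ0 hderiv (mul_nonneg ht hc.le),
    smul_eq_mul]
  field_simp

end Rescaling

theorem stmt12_general (p q : ℝ) (hp : 1 < p) (hpq : p ≤ q)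
    (σ : ℕ → ℝ) (hσpos : ∀ j, 0 < σ j)
    (φ φ' : ℝ → ℝ) (hφ0 : φ 0 = 0)
    (hconv : ConvexOn ℝ (Set.Ici 0) φ)
    (hderiv : ∀ t : ℝ, 0 ≤ t → HasDerivWithinAt φ (φ' t) (Set.Ici 0) t)
    (hcont : ContinuousOn φ' (Set.Ici 0))
    (hinc : ∀ s t : ℝ, 0 < s → s ≤ t → φ' s / s ^ (p-1) ≤ φ' t / t ^ (p-1))
    (hdec : ∀ s t : ℝ, 0 < s → s ≤ t → φ' t / t ^ (q-1) ≤ φ' s / s ^ (q-1)) :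
    ∃ k : ℕ → ℕ, StrictMono k ∧ ∃ φinf φinf' : ℝ → ℝ,
      ConvexOn ℝ (Set.Ici 0) φinf ∧
      (∀ t : ℝ, 0 ≤ t → HasDerivWithinAt φinf (φinf' t) (Set.Ici 0) t) ∧
      ContinuousOn φinf' (Set.Ici 0) ∧
      (∀ s t : ℝ, 0 < s → s ≤ t → φinf' s / s ^ (p-1) ≤ φinf' t / t ^ (p-1)) ∧
      (∀ s t : ℝ, 0 < s → s ≤ t → φinf' t / t ^ (q-1) ≤ φinf' s / s ^ (q-1)) ∧
      ∀ K : Set ℝ, IsCompact K → K ⊆ Set.Ici 0 →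
        TendstoUniformlyOn (fun n t => φ (t * σ (k n)) / φ (σ (k n))) φinf
          Filter.atTop K := by
  have ha : 0 < p - 1 := sub_pos.2 hp
  have hb : 0 < q - 1 := sub_pos.2 (hp.trans_le hpq)
  obtain ⟨g, hgc, hg, hgderiv⟩ := hconv.exists_isIncDec_deriv ha hb hderiv hcont
    (fun s hs t ht hst => hinc s t hs hst) (fun s hs t ht hst => hdec s t hs hst)
  have hψ (j : ℕ) := hg.rescale hgc hφ0 hgderiv (by linarith : -1 < q - 1) (hσpos j)
  obtain ⟨G, hG, k, hk, hlim⟩ := IsIncDec.exists_subseq_tendstoUniformlyOn ha hψ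
  have hGc := hG.continuous ha
  have hGderiv (t : ℝ) : HasDerivAt (fun t => ∫ u in 0..t, G u) (G t) t :=
    (hGc.integral_hasStrictDerivAt 0 t).hasDerivAt
  have hGconv : ConvexOn ℝ univ (fun t => ∫ u in 0..t, G u) :=
    Monotone.convexOn_univ_of_deriv (fun t => (hGderiv t).differentiableAt)
      (by rw [funext fun t => (hGderiv t).deriv]; exact hG.mono)
  refine ⟨k, hk, fun t => ∫ u in 0..t, G u, G, hGconv.subset (subset_univ _) (convex_Ici 0),
    fun t _ => (hGderiv t).hasDerivWithinAt, hGc.continuousOn,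
    fun s t hs hst => hG.inc hs (hs.trans_le hst) hst,
    fun s t hs hst => hG.dec hs (hs.trans_le hst) hst, fun K hK hK0 => ?_⟩
  obtain ⟨R, hR⟩ := hK.bddAbove
  have hprim := TendstoUniformlyOn.intervalIntegral
    (fun n => ((hψ (k n)).continuous ha).intervalIntegrable 0 R) (hGc.intervalIntegrable 0 R)
    (hlim _ isCompact_Icc)
  refine (hprim.mono fun t ht => ⟨hK0 ht, hR ht⟩).congr (Eventually.of_forall fun n t ht => ?_)
  exact integral_rescale_eq_div hgc hφ0 hgderiv (hσpos (k n)) (hK0 ht)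

/-- Recession-function compactness: the rescalings φ(tσ_j)/φ(σ_j) of a C¹ convex
function with derivative satisfying (inc)_{p-1} and (dec)_{q-1} subconverge locally
uniformly to a C¹ convex limit with the same properties. -/
theorem stmt12 (p q : ℝ) (hp : 1 < p) (hpq : p ≤ q)
    (σ : ℕ → ℝ) (hσpos : ∀ j, 0 < σ j)
    (hσ : Filter.Tendsto σ Filter.atTop Filter.atTop)
    (φ φ' : ℝ → ℝ) (hφ0 : φ 0 = 0)
    (hconv : ConvexOn ℝ (Set.Ici 0) φ)
    (hderiv : ∀ t : ℝ, 0 ≤ t → HasDerivWithinAt φ (φ' t) (Set.Ici 0) t)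
    (hcont : ContinuousOn φ' (Set.Ici 0))
    (hinc : ∀ s t : ℝ, 0 < s → s ≤ t → φ' s / s ^ (p-1) ≤ φ' t / t ^ (p-1))
    (hdec : ∀ s t : ℝ, 0 < s → s ≤ t → φ' t / t ^ (q-1) ≤ φ' s / s ^ (q-1)) :
    ∃ k : ℕ → ℕ, StrictMono k ∧ ∃ φinf φinf' : ℝ → ℝ,
      ConvexOn ℝ (Set.Ici 0) φinf ∧
      (∀ t : ℝ, 0 ≤ t → HasDerivWithinAt φinf (φinf' t) (Set.Ici 0) t) ∧
      ContinuousOn φinf' (Set.Ici 0) ∧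
      (∀ s t : ℝ, 0 < s → s ≤ t → φinf' s / s ^ (p-1) ≤ φinf' t / t ^ (p-1)) ∧
      (∀ s t : ℝ, 0 < s → s ≤ t → φinf' t / t ^ (q-1) ≤ φinf' s / s ^ (q-1)) ∧
      ∀ K : Set ℝ, IsCompact K → K ⊆ Set.Ici 0 →
        TendstoUniformlyOn (fun n t => φ (t * σ (k n)) / φ (σ (k n))) φinf
          Filter.atTop K :=
  stmt12_general p q hp hpq σ hσpos φ φ' hφ0 hconv hderiv hcont hinc hdec
end

section
/- Let φ̃: [0,∞) → [0,∞) be C¹ on [0,∞) and C² on (0,∞), convex with φ̃(0) = 0, and suppose there is a constant c ≥ 1 such that φ̃'(t)/c ≤ t·φ̃''(t) ≤ c·φ̃'(t) for all t > 0. Then for all z₁, z₂ ∈ ℝ^d with z₂ ≠ 0 there is a constant C depending only on c, p, q such that φ̃''(|z₁|+|z₂|)·|z₁-z₂|² ≤ C·(φ̃(|z₁|) - φ̃(|z₂|) - (φ̃'(|z₂|)/|z₂|)·z₂·(z₁-z₂)), where we additionally assume φ̃' satisfies (inc)_{p-1} and (dec)_{q-1} for some 1 < p ≤ q. -/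
/-!
Write `a = ‖z₁‖`, `b = ‖z₂‖`, `ι = ⟪z₁, z₂⟫`. Then `‖z₁ - z₂‖² = (a - b)² + 2 (a b - ι)` and the
right-hand side is `D(a, b) + (φ'(b) / b) (a b - ι)`, where `D(a, b) = φ a - φ b - φ'(b) (a - b)` is
the Bregman distance of `φ`. By convexity and the mean value theorem for `φ'` on
`[(a + 3b)/4, (a + b)/2]`, `D(a, b) ≥ φ''(ξ) (a - b)² / 8` for some `ξ ∈ [(a + b)/4, a + b]`, and
`φ''(a + b) ≲ φ''(ξ)` because `(dec)_{q-1}` together with `t φ'' ≈ φ'` gives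
`φ''(t) ≲ φ'(s) / s ≲ φ''(s)` whenever `s ≤ t ≤ 4s`. The angular term `a b - ι` is paid for by
`(φ'(b) / b) (a b - ι)` when `a ≤ 2b`, and by `(a - b)²` when `a > 2b`.
-/

open Set

lemma ConvexOn.add_mul_sub_le_of_hasDerivWithinAt {S : Set ℝ} {f : ℝ → ℝ} {f' x y : ℝ}
    (hf : ConvexOn ℝ S f) (hx : x ∈ S) (hy : y ∈ S) (hf' : HasDerivWithinAt f f' S x) :
    f x + f' * (y - x) ≤ f y := by
  rcases lt_trichotomy x y with hxy | rfl | hxy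
  · have h := hf.le_slope_of_hasDerivWithinAt hx hy hxy hf'
    rw [slope_def_field, le_div_iff₀ (sub_pos.2 hxy)] at h
    linarith
  · simp
  · have h := hf.slope_le_of_hasDerivWithinAt hy hx hxy hf'
    rw [slope_def_field, div_le_iff₀ (sub_pos.2 hxy)] at h
    linarith

lemma ConvexOn.monotoneOn_of_hasDerivWithinAt {S : Set ℝ} {f f' : ℝ → ℝ}
    (hf : ConvexOn ℝ S f) (hf' : ∀ x ∈ S, HasDerivWithinAt f (f' x) S x) :
    MonotoneOn f' S := by
  intro x hx y hy hxy
  rcases hxy.eq_or_lt with rfl | hxy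
  · rfl
  · exact (hf.le_slope_of_hasDerivWithinAt hx hy hxy (hf' x hx)).trans
      (hf.slope_le_of_hasDerivWithinAt hx hy hxy (hf' y hy))

lemma exists_mem_uIcc_sub_eq_mul_sub {f f' : ℝ → ℝ} {a b : ℝ}
    (hf : ∀ x ∈ uIcc a b, HasDerivAt f (f' x) x) :
    ∃ ξ ∈ uIcc a b, f b - f a = f' ξ * (b - a) := by
  wlog hab : a < b generalizing a b
  · rcases (not_lt.1 hab).eq_or_lt with rfl | hba
    · exact ⟨_, left_mem_uIcc, by ring⟩
    · obtain ⟨ξ, hξ, h⟩ := this (by rwa [uIcc_comm]) hba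
      exact ⟨ξ, uIcc_comm b a ▸ hξ, by linear_combination -h⟩
  obtain ⟨ξ, hξ, h⟩ := exists_hasDerivAt_eq_slope f f' hab
    (fun x hx => (hf x (Icc_subset_uIcc hx)).continuousAt.continuousWithinAt)
    (fun x hx => hf x (Icc_subset_uIcc (Ioo_subset_Icc_self hx)))
  refine ⟨ξ, Icc_subset_uIcc (Ioo_subset_Icc_self hξ), ?_⟩
  rw [h, div_mul_cancel₀ _ (sub_ne_zero.2 hab.ne')]

lemma le_rpow_mul_of_div_rpow_le {f : ℝ → ℝ} {r s t k : ℝ} (hr : 0 ≤ r) (hs : 0 < s)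
    (hst : s ≤ t) (htk : t ≤ k * s) (hfs : 0 ≤ f s) (h : f t / t ^ r ≤ f s / s ^ r) :
    f t ≤ k ^ r * f s := by
  have ht : 0 < t := hs.trans_le hst
  have hk : 0 ≤ k := nonneg_of_mul_nonneg_left (ht.le.trans htk) hs
  rw [div_le_iff₀ (by positivity)] at h
  calc f t ≤ f s / s ^ r * t ^ r := h
    _ ≤ f s / s ^ r * (k * s) ^ r := by gcongr
    _ = k ^ r * f s := by
      rw [Real.mul_rpow hk hs.le]
      field_simp

section Orlicz

variable {φ φ' φ'' : ℝ → ℝ}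

lemma deriv2_le_mul_deriv_div {c k r s t : ℝ} (hc : 0 ≤ c) (hr : 0 ≤ r) (hs : 0 < s)
    (hst : s ≤ t) (htk : t ≤ k * s) (hφ''t : 0 ≤ φ'' t) (hφ's : 0 ≤ φ' s)
    (hcomp : t * φ'' t ≤ c * φ' t) (hdec : φ' t / t ^ r ≤ φ' s / s ^ r) :
    φ'' t ≤ c * k ^ r * (φ' s / s) := by
  have hdoub := le_rpow_mul_of_div_rpow_le hr hs hst htk hφ's hdec
  rw [← mul_div_assoc, le_div_iff₀ hs]
  calc φ'' t * s ≤ t * φ'' t := by rw [mul_comm]; gcongr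
    _ ≤ c * φ' t := hcomp
    _ ≤ c * (k ^ r * φ' s) := by gcongr
    _ = c * k ^ r * φ' s := by ring

lemma exists_deriv2_mul_sq_le_bregman (hconv : ConvexOn ℝ (Ici 0) φ)
    (hφ : ∀ t, 0 ≤ t → HasDerivWithinAt φ (φ' t) (Ici 0) t)
    (hφ' : ∀ t, 0 < t → HasDerivAt φ' (φ'' t) t) {a b : ℝ} (ha : 0 ≤ a) (hb : 0 < b) :
    ∃ ξ ∈ Icc ((a + b) / 4) (a + b), φ'' ξ * (a - b) ^ 2 / 8 ≤ φ a - φ b - φ' b * (a - b) := by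
  have hsub : uIcc ((a + 3 * b) / 4) ((a + b) / 2) ⊆ Icc ((a + b) / 4) (a + b) :=
    uIcc_subset_Icc ⟨by linarith, by linarith⟩ ⟨by linarith, by linarith⟩
  obtain ⟨ξ, hξ, hmvt⟩ :=
    exists_mem_uIcc_sub_eq_mul_sub fun x hx => hφ' x (by linarith [(hsub hx).1])
  refine ⟨ξ, hsub hξ, ?_⟩
  have hm : 0 ≤ (a + b) / 2 := by positivity
  have tangent_m := hconv.add_mul_sub_le_of_hasDerivWithinAt hm ha (hφ _ hm)
  have tangent_b := hconv.add_mul_sub_le_of_hasDerivWithinAt hb.le hm (hφ b hb.le)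
  have mono : 0 ≤ (φ' ((a + 3 * b) / 4) - φ' b) * ((a + 3 * b) / 4 - b) := by
    have := (hconv.monotoneOn_of_hasDerivWithinAt hφ).monovaryOn monotoneOn_id
    simpa using this.sub_mul_sub_nonneg hb.le (show (0 : ℝ) ≤ (a + 3 * b) / 4 by positivity)
  -- with `m = (a + b) / 2`, `m' = (a + 3 * b) / 4`:
  -- `D(a, b) ≥ (φ' m - φ' b) (m - b) ≥ (φ' m - φ' m') (m - b) = φ'' ξ (m - m') (m - b)`
  linear_combination tangent_m + tangent_b + 2 * mono - (a - b) / 2 * hmvt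

lemma deriv2_add_mul_sq_le_bregman (hconv : ConvexOn ℝ (Ici 0) φ)
    (hφ : ∀ t, 0 ≤ t → HasDerivWithinAt φ (φ' t) (Ici 0) t)
    (hφ' : ∀ t, 0 < t → HasDerivAt φ' (φ'' t) t) {K : ℝ} (hK : 0 ≤ K)
    (hcmp : ∀ s t, 0 < s → s ≤ t → t ≤ 4 * s → φ'' t ≤ K * φ'' s) {a b : ℝ} (ha : 0 ≤ a)
    (hb : 0 < b) :
    φ'' (a + b) * (a - b) ^ 2 ≤ 8 * K * (φ a - φ b - φ' b * (a - b)) := by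
  obtain ⟨ξ, ⟨hξ₁, hξ₂⟩, hξ⟩ := exists_deriv2_mul_sq_le_bregman hconv hφ hφ' ha hb
  calc φ'' (a + b) * (a - b) ^ 2 ≤ K * φ'' ξ * (a - b) ^ 2 := by
        gcongr
        exact hcmp ξ (a + b) (by linarith) hξ₂ (by linarith)
    _ = 8 * K * (φ'' ξ * (a - b) ^ 2 / 8) := by ring
    _ ≤ 8 * K * (φ a - φ b - φ' b * (a - b)) := by gcongr

lemma deriv2_add_mul_le_of_abs_le_mul (hconv : ConvexOn ℝ (Ici 0) φ)
    (hφ : ∀ t, 0 ≤ t → HasDerivWithinAt φ (φ' t) (Ici 0) t) {K A a b ι : ℝ} (hK : 0 ≤ K)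
    (hA : 0 ≤ A) (ha : 0 ≤ a) (hb : 0 < b) (hι : |ι| ≤ a * b) (hφ'' : 0 ≤ φ'' (a + b))
    (hφ' : 0 ≤ φ' b) (hkey : φ'' (a + b) * (a - b) ^ 2 ≤ K * (φ a - φ b - φ' b * (a - b)))
    (hcmp : a ≤ 2 * b → φ'' (a + b) ≤ A * (φ' b / b)) :
    φ'' (a + b) * (a ^ 2 - 2 * ι + b ^ 2) ≤
      (9 * K + 2 * A) * (φ a - φ b - φ' b / b * (ι - b ^ 2)) := by
  set F := φ'' (a + b)
  set D := φ a - φ b - φ' b * (a - b)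
  set P := φ' b / b
  have hD : 0 ≤ D := by
    have := hconv.add_mul_sub_le_of_hasDerivWithinAt hb.le ha (hφ b hb.le)
    linarith
  have hP : 0 ≤ P := by positivity
  have hδ : 0 ≤ a * b - ι := by linarith [le_abs_self ι]
  have hKD := mul_nonneg hK hD
  have hAD := mul_nonneg hA hD
  have hKPδ := mul_nonneg (mul_nonneg hK hP) hδ
  have hAPδ := mul_nonneg (mul_nonneg hA hP) hδ
  have hsplit : φ a - φ b - P * (ι - b ^ 2) = D + P * (a * b - ι) := by
    simp only [D, P]
    field_simp
    ring
  rw [hsplit]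
  rcases le_or_gt a (2 * b) with hab | hab
  · have hFδ : F * (a * b - ι) ≤ A * P * (a * b - ι) := by gcongr; exact hcmp hab
    linear_combination hkey + 2 * hFδ + 8 * hKD + 2 * hAD + 9 * hKPδ
  · have hδ' : a * b - ι ≤ 4 * (a - b) ^ 2 := by
      have h : 0 ≤ (2 * a - b) * (a - 2 * b) := mul_nonneg (by linarith) (by linarith)
      nlinarith [neg_abs_le ι]
    have hFδ := mul_le_mul_of_nonneg_left hδ' hφ''
    linear_combination 9 * hkey + 2 * hFδ + 2 * hAD + 9 * hKPδ + 2 * hAPδ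

end Orlicz

theorem stmt14_general (d : ℕ) (p q c : ℝ) (hp : 1 < p) (hpq : p ≤ q) (hc : 1 ≤ c)
    (φ φ' φ'' : ℝ → ℝ)
    (hconv : ConvexOn ℝ (Set.Ici 0) φ)
    (hC1 : ∀ t : ℝ, 0 ≤ t → HasDerivWithinAt φ (φ' t) (Set.Ici 0) t)
    (hC2 : ∀ t : ℝ, 0 < t → HasDerivAt φ' (φ'' t) t)
    (hcomp : ∀ t : ℝ, 0 < t → φ' t / c ≤ t * φ'' t ∧ t * φ'' t ≤ c * φ' t)
    (hdec : ∀ s t : ℝ, 0 < s → s ≤ t → φ' t / t ^ (q-1) ≤ φ' s / s ^ (q-1)) :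
    ∃ C > (0:ℝ), ∀ z₁ z₂ : EuclideanSpace ℝ (Fin d), z₂ ≠ 0 →
      φ'' (‖z₁‖ + ‖z₂‖) * ‖z₁ - z₂‖ ^ 2 ≤
        C * (φ ‖z₁‖ - φ ‖z₂‖ -
          (φ' ‖z₂‖ / ‖z₂‖) * (inner ℝ z₂ (z₁ - z₂) : ℝ)) := by
  have hq : 0 ≤ q - 1 := by linarith
  have hc₀ : 0 < c := by linarith
  have hφ'' : ∀ t, 0 < t → 0 ≤ φ'' t := fun t ht => by
    rw [← (hC2 t ht).hasDerivWithinAt.derivWithin (uniqueDiffOn_Ici 0 t ht.le)]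
    exact (hconv.monotoneOn_of_hasDerivWithinAt hC1).derivWithin_nonneg
  have hφ' : ∀ t, 0 < t → 0 ≤ φ' t := fun t ht =>
    nonneg_of_mul_nonneg_right ((mul_nonneg ht.le (hφ'' t ht)).trans (hcomp t ht).2) hc₀
  set A := c * 4 ^ (q - 1)
  have hdoub : ∀ s t, 0 < s → s ≤ t → t ≤ 4 * s → φ'' t ≤ A * (φ' s / s) :=
    fun s t hs hst hts => deriv2_le_mul_deriv_div hc₀.le hq hs hst hts
      (hφ'' t (hs.trans_le hst)) (hφ' s hs) (hcomp t (hs.trans_le hst)).2 (hdec s t hs hst)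
  have hcmp : ∀ s t, 0 < s → s ≤ t → t ≤ 4 * s → φ'' t ≤ A * c * φ'' s := by
    intro s t hs hst hts
    have hφ's : φ' s / s ≤ c * φ'' s := by
      rw [div_le_iff₀ hs]
      linarith [(div_le_iff₀ hc₀).1 (hcomp s hs).1]
    calc φ'' t ≤ A * (φ' s / s) := hdoub s t hs hst hts
      _ ≤ A * (c * φ'' s) := by gcongr
      _ = A * c * φ'' s := by ring
  refine ⟨9 * (8 * (A * c)) + 2 * A, by positivity, fun z₁ z₂ hz₂ => ?_⟩
  have hb : 0 < ‖z₂‖ := norm_pos_iff.2 hz₂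
  rw [norm_sub_sq_real, inner_sub_right, real_inner_self_eq_norm_sq, real_inner_comm]
  exact deriv2_add_mul_le_of_abs_le_mul hconv hC1 (by positivity) (by positivity) (norm_nonneg _)
    hb ((abs_real_inner_le_norm _ _).trans_eq (mul_comm _ _)) (hφ'' _ (by positivity)) (hφ' _ hb)
    (deriv2_add_mul_sq_le_bregman hconv hC1 hC2 (by positivity) hcmp (norm_nonneg _) hb)
    fun h => hdoub _ _ hb (by linarith [norm_nonneg z₁]) (by linarith)

/-- Strong monotonicity inequality for Orlicz functions with Uhlenbeck structure. -/
theorem stmt14 (d : ℕ) (p q c : ℝ) (hp : 1 < p) (hpq : p ≤ q) (hc : 1 ≤ c)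
    (φ φ' φ'' : ℝ → ℝ)
    (hφ0 : φ 0 = 0)
    (hconv : ConvexOn ℝ (Set.Ici 0) φ)
    (hC1 : ∀ t : ℝ, 0 ≤ t → HasDerivWithinAt φ (φ' t) (Set.Ici 0) t)
    (hcont : ContinuousOn φ' (Set.Ici 0))
    (hC2 : ∀ t : ℝ, 0 < t → HasDerivAt φ' (φ'' t) t)
    (hcomp : ∀ t : ℝ, 0 < t → φ' t / c ≤ t * φ'' t ∧ t * φ'' t ≤ c * φ' t)
    (hinc : ∀ s t : ℝ, 0 < s → s ≤ t → φ' s / s ^ (p-1) ≤ φ' t / t ^ (p-1))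
    (hdec : ∀ s t : ℝ, 0 < s → s ≤ t → φ' t / t ^ (q-1) ≤ φ' s / s ^ (q-1)) :
    ∃ C > (0:ℝ), ∀ z₁ z₂ : EuclideanSpace ℝ (Fin d), z₂ ≠ 0 →
      φ'' (‖z₁‖ + ‖z₂‖) * ‖z₁ - z₂‖ ^ 2 ≤
        C * (φ ‖z₁‖ - φ ‖z₂‖ -
          (φ' ‖z₂‖ / ‖z₂‖) * (inner ℝ z₂ (z₁ - z₂) : ℝ)) :=
  stmt14_general d p q c hp hpq hc φ φ' φ'' hconv hC1 hC2 hcomp hdec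
end
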